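/- arXiv:1707.09950 — 2 statements merged into one kernel-verified Lean document; each statement's English description precedes it below -/
import Mathlib

section
/- The spectrum of K, viewed as a bounded linear operator on the complex Hilbert space L²(S¹), equals {0} ∪ {1/(1 − 4m²) : m ∈ ℤ}. In particular 1 belongs to the spectrum, all other nonzero spectral values are negative and accumulate only at 0, and 0 is the only accumulation point of the spectrum. -/
/-!
The Fourier modes `e^{imθ}` are eigenfunctions of `K`: the substitution `δ = sin x` turns the
average over impact parameters into `∫ cos x · e^{-2imx} dx` over `[-π/2, π/2]`, and the
eigenvalue is `1 / (1 - 4m²)`. So `K` is diagonal in the Fourier Hilbert basis of `L²(S¹)`, and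
the spectrum of a diagonal operator is the closure of its eigenvalues: off that closure `z - K`
is bounded below and has dense range. As `1 / (1 - 4m²) → 0`, the closure adds only `0`, which
is then the only accumulation point.
-/

open MeasureTheory Real

noncomputable section

/-- The unit circle, modelled as `ℝ / 2πℤ`, carrying the arclength measure
(total mass `2π`). -/
abbrev S1 : Type := AddCircle (2 * π)

instance : Fact ((0:ℝ) < 2 * π) := ⟨by positivity⟩

/-- The gain operator of the two-dimensional hard-disk linear Boltzmann equation:
`(K f)(v(θ)) = (1/2) ∫_{−1}^{1} f(v(θ + π − 2 arcsin δ)) dδ`. -/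
def Kop (f : S1 → ℂ) (θ : S1) : ℂ :=
  (1 / 2 : ℂ) * ∫ δ in (-1:ℝ)..1, f (θ + ((π - 2 * arcsin δ : ℝ) : S1))

open Set Filter Topology

namespace HilbertBasis

variable {ι 𝕜 E : Type*} [RCLike 𝕜] [NormedAddCommGroup E] [InnerProductSpace 𝕜 E]
  {b : HilbertBasis ι 𝕜 E} {T : E →L[𝕜] E} {μ : ι → 𝕜}

lemma repr_apply_eq_mul_of_apply_eq_smul (h : ∀ i, T (b i) = μ i • b i) (x : E) (i : ι) :
    b.repr (T x) i = μ i * b.repr x i := by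
  classical
  have hdense : Dense (Submodule.span 𝕜 (range b) : Set E) :=
    Submodule.dense_iff_topologicalClosure_eq_top.mpr b.dense_span
  have := ContinuousLinearMap.ext_on hdense (f := (innerSL 𝕜 (b i)).comp T)
    (g := μ i • innerSL 𝕜 (b i)) <| by
      rintro - ⟨j, rfl⟩
      simp only [ContinuousLinearMap.comp_apply, h, innerSL_apply_apply, inner_smul_right,
        smul_apply, smul_eq_mul, orthonormal_iff_ite.mp b.orthonormal]
      split_ifs with hij <;> simp [hij]
  simpa [b.repr_apply_apply] using congr($this x)

lemma mem_spectrum_of_apply_eq_smul (h : ∀ i, T (b i) = μ i • b i) (i : ι) :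
    μ i ∈ spectrum 𝕜 T := by
  rw [spectrum.mem_iff]
  intro hunit
  obtain ⟨S, hS⟩ := hunit.exists_left_inv
  apply b.orthonormal.ne_zero i
  simpa [h, Algebra.algebraMap_eq_smul_one] using congr($hS (b i)).symm

lemma notMem_spectrum_of_apply_eq_smul [CompleteSpace E] (h : ∀ i, T (b i) = μ i • b i) {z : 𝕜}
    (hz : z ∉ closure (range μ)) : z ∉ spectrum 𝕜 T := by
  simp only [Metric.mem_closure_range_iff, dist_eq_norm, not_forall, not_exists, not_lt] at hz
  obtain ⟨d, hd, hdμ⟩ := hz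
  set A : E →L[𝕜] E := algebraMap 𝕜 (E →L[𝕜] E) z - T
  have hA : ∀ x i, b.repr (A x) i = (z - μ i) * b.repr x i := fun x i ↦ by
    simp only [A, Algebra.algebraMap_eq_smul_one, sub_apply,
      smul_apply, one_apply_eq_self, map_sub, map_smul,
      lp.coeFn_sub, lp.coeFn_smul, Pi.sub_apply, Pi.smul_apply, smul_eq_mul,
      repr_apply_eq_mul_of_apply_eq_smul h, sub_mul]
  have hbound : ∀ x, ‖x‖ ≤ (⟨d⁻¹, by positivity⟩ : NNReal) * ‖A x‖ := fun x ↦ by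
    have : ‖d • b.repr x‖ ≤ ‖b.repr (A x)‖ := lp.norm_mono two_ne_zero fun i ↦ by
      simp only [lp.coeFn_smul, Pi.smul_apply, norm_smul, hA, norm_mul, Real.norm_of_nonneg hd.le]
      gcongr
      exact hdμ i
    rw [norm_smul, Real.norm_of_nonneg hd.le, LinearIsometryEquiv.norm_map,
      LinearIsometryEquiv.norm_map] at this
    rw [inv_mul_eq_div, le_div_iff₀ hd, mul_comm]
    exact this
  have hanti := A.antilipschitz_of_bound hbound
  have hrange : LinearMap.range (A : E →ₗ[𝕜] E) = ⊤ := by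
    refine top_le_iff.mp (b.dense_span ▸ Submodule.topologicalClosure_minimal _ ?_
      (hanti.isClosed_range A.uniformContinuous))
    rw [Submodule.span_le]
    rintro - ⟨i, rfl⟩
    have hzi : z - μ i ≠ 0 := fun h0 ↦ by simpa [h0] using hdμ i |>.trans_lt' hd
    refine ⟨(z - μ i)⁻¹ • b i, ?_⟩
    simp [A, Algebra.algebraMap_eq_smul_one, h, smul_smul, ← sub_smul, hzi]
  rw [spectrum.notMem_iff, ContinuousLinearMap.isUnit_iff_bijective]
  exact ⟨hanti.injective, LinearMap.range_eq_top.mp hrange⟩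

theorem spectrum_eq_closure_range [CompleteSpace E] (h : ∀ i, T (b i) = μ i • b i) :
    spectrum 𝕜 T = closure (range μ) := by
  refine subset_antisymm (fun z ↦ not_imp_not.mp (notMem_spectrum_of_apply_eq_smul h)) ?_
  exact (spectrum.isClosed T).closure_subset_iff.mpr <| range_subset_iff.mpr
    (mem_spectrum_of_apply_eq_smul h)

end HilbertBasis

namespace AddCircle

variable {T : ℝ} [hT : Fact (0 < T)]

/-- `volume` on `AddCircle T` has total mass `T`, hence the normalisation `T^{-1/2}`. -/
def volumeFourierLp (n : ℤ) : Lp ℂ 2 (volume : Measure (AddCircle T)) :=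
  ((√T : ℝ) : ℂ)⁻¹ • ContinuousMap.toLp (E := ℂ) 2 volume ℂ (fourier n)

lemma coeFn_volumeFourierLp (n : ℤ) :
    volumeFourierLp n =ᵐ[volume] fun x : AddCircle T ↦ ((√T : ℝ) : ℂ)⁻¹ * fourier n x := by
  filter_upwards [Lp.coeFn_smul (((√T : ℝ) : ℂ)⁻¹) (ContinuousMap.toLp (E := ℂ) 2 volume ℂ
    (fourier n)), ContinuousMap.coeFn_toLp (p := 2) (𝕜 := ℂ) volume (fourier n)] with x hx hx'
  rw [volumeFourierLp, hx, Pi.smul_apply, hx', smul_eq_mul]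

lemma orthonormal_volumeFourierLp : Orthonormal ℂ (volumeFourierLp (T := T)) := by
  rw [orthonormal_iff_ite]
  intro i j
  have hhaar := orthonormal_iff_ite.mp (orthonormal_fourier (T := T)) i j
  rw [ContinuousMap.inner_toLp, integral_haarAddCircle, Complex.real_smul] at hhaar
  have hsqrt : ((√T : ℝ) : ℂ)⁻¹ * ((√T : ℝ) : ℂ)⁻¹ = ((T⁻¹ : ℝ) : ℂ) := by
    rw [← mul_inv, ← Complex.ofReal_mul, Real.mul_self_sqrt hT.out.le, Complex.ofReal_inv]
  rw [volumeFourierLp, volumeFourierLp, inner_smul_left, inner_smul_right,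
    ContinuousMap.inner_toLp, map_inv₀, Complex.conj_ofReal, ← mul_assoc, hsqrt, hhaar]

lemma span_volumeFourierLp_closure_eq_top :
    (Submodule.span ℂ (range (volumeFourierLp (T := T)))).topologicalClosure = ⊤ := by
  have hsqrt : IsUnit ((√T : ℝ) : ℂ)⁻¹ := by simpa using (Real.sqrt_pos.mpr hT.out).ne'
  rw [show volumeFourierLp = fun n ↦ ((√T : ℝ) : ℂ)⁻¹ • ContinuousMap.toLp (E := ℂ) 2 volume ℂ
    (fourier n) from rfl, range_smul, Submodule.span_smul_eq_of_isUnit _ _ hsqrt,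
    range_comp']
  have h := (ContinuousMap.toLp_denseRange ℂ (volume : Measure (AddCircle T)) ℂ (p := 2)
    ENNReal.ofNat_ne_top).topologicalClosure_map_submodule span_fourier_closure_eq_top
  rwa [Submodule.map_span, ContinuousLinearMap.coe_coe] at h

def volumeFourierBasis : HilbertBasis ℤ ℂ (Lp ℂ 2 (volume : Measure (AddCircle T))) :=
  HilbertBasis.mk orthonormal_volumeFourierLp span_volumeFourierLp_closure_eq_top.ge

lemma coe_volumeFourierBasis : ⇑(volumeFourierBasis (T := T)) = volumeFourierLp :=
  HilbertBasis.coe_mk _ _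

end AddCircle

section

variable {ι X : Type*} [TopologicalSpace X] [T2Space X] {f : ι → X} {x : X}

lemma Filter.Tendsto.closure_range_eq_insert [Infinite ι] (hf : Tendsto f cofinite (𝓝 x)) :
    closure (range f) = insert x (range f) :=
  subset_antisymm
    (hf.isCompact_insert_range_of_cofinite.isClosed.closure_subset_iff.mpr (subset_insert _ _))
    (insert_subset (mem_closure_of_tendsto hf (Eventually.of_forall mem_range_self))
      subset_closure)

lemma Filter.Tendsto.accPt_insert_range_iff [Infinite ι]
    (hf : Tendsto f cofinite (𝓝 x)) (hfx : ∀ i, f i ≠ x) {y : X} :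
    AccPt y (𝓟 (insert x (range f))) ↔ y = x := by
  constructor
  · intro hy
    by_contra hyx
    obtain ⟨U, V, hU, hV, hyU, hxV, hUV⟩ := t2_separation hyx
    have hfin : {i | f i ∉ V}.Finite := eventually_cofinite.mp (hf.eventually (hV.mem_nhds hxV))
    refine Set.Infinite.of_accPt (hy.nhds_inter (hU.mem_nhds hyU)) (hfin.image f |>.subset ?_)
    rintro z ⟨hzU, rfl | ⟨i, rfl⟩⟩
    · exact absurd hxV (hUV.notMem_of_mem_left hzU)
    · exact mem_image_of_mem f (hUV.notMem_of_mem_left hzU)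
  · rintro rfl
    rw [accPt_iff_frequently]
    exact hf.frequently (Frequently.of_forall fun i ↦ ⟨hfx i, mem_insert_of_mem _ ⟨i, rfl⟩⟩)
end

lemma hasDerivAt_cexp_mul_cos_sin (c : ℂ) (x : ℝ) :
    HasDerivAt (fun x : ℝ ↦ Complex.exp (c * x) * (c * Real.cos x + Real.sin x))
      ((1 + c ^ 2) * (Real.cos x * Complex.exp (c * x))) x := by
  have hexp : HasDerivAt (fun x : ℝ ↦ Complex.exp (c * x)) (Complex.exp (c * x) * c) x := by
    simpa using ((Complex.ofRealCLM.hasDerivAt (x := x)).const_mul c).cexp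
  have htrig : HasDerivAt (fun x : ℝ ↦ c * (Real.cos x : ℂ) + Real.sin x)
      (c * ((-Real.sin x : ℝ) : ℂ) + Real.cos x) x :=
    ((Real.hasDerivAt_cos x).ofReal_comp.const_mul c).add (Real.hasDerivAt_sin x).ofReal_comp
  exact (hexp.mul htrig).congr_deriv (by push_cast; ring)

lemma integral_cexp_mul_arcsin (c : ℂ) (hc : 1 + c ^ 2 ≠ 0) :
    ∫ δ in (-1 : ℝ)..1, Complex.exp (c * arcsin δ) =
      2 * Complex.cosh (c * π / 2) / (1 + c ^ 2) := by
  have hsubst := intervalIntegral.integral_deriv_smul_comp (a := -(π / 2)) (b := π / 2)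
    (fun x _ ↦ Real.hasDerivAt_sin x) continuous_cos.continuousOn
    (g := fun δ : ℝ ↦ Complex.exp (c * arcsin δ)) (by fun_prop)
  rw [Real.sin_neg, Real.sin_pi_div_two] at hsubst
  rw [← hsubst,
    intervalIntegral.integral_congr (g := fun x : ℝ ↦ Real.cos x * Complex.exp (c * x))]
  swap
  · intro x hx
    rw [uIcc_of_le (by linarith [pi_pos])] at hx
    simp [Real.arcsin_sin hx.1 hx.2]
  rw [intervalIntegral.integral_eq_sub_of_hasDerivAt
    (f := fun x : ℝ ↦ Complex.exp (c * x) * (c * Real.cos x + Real.sin x) / (1 + c ^ 2))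
    (fun x _ ↦ ((hasDerivAt_cexp_mul_cos_sin c x).div_const _).congr_deriv
      (mul_div_cancel_left₀ _ hc))
    (by apply Continuous.intervalIntegrable; fun_prop)]
  simp only [Real.cos_neg, Real.sin_neg, Real.cos_pi_div_two, Real.sin_pi_div_two]
  push_cast
  rw [Complex.two_cosh]
  ring_nf

lemma ae_eq_integral_comp_add {G α E : Type*} [MeasurableSpace G] [AddGroup G]
    [MeasurableAdd₂ G] [MeasurableSpace α] [NormedAddCommGroup E] [NormedSpace ℝ E]
    {μ : Measure G} [μ.IsAddRightInvariant] [SFinite μ] {ν : Measure α} [SFinite ν]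
    {s : α → G} (hs : Measurable s) {f g : G → E} (hf : StronglyMeasurable f)
    (hg : StronglyMeasurable g) (hfg : f =ᵐ[μ] g) :
    (fun θ ↦ ∫ δ, f (θ + s δ) ∂ν) =ᵐ[μ] fun θ ↦ ∫ δ, g (θ + s δ) ∂ν := by
  have hadd : Measurable fun p : G × α ↦ p.1 + s p.2 :=
    measurable_fst.add (hs.comp measurable_snd)
  have hae : ∀ᵐ θ ∂μ, ∀ᵐ δ ∂ν, f (θ + s δ) = g (θ + s δ) := by
    rw [Measure.ae_ae_comm]
    · exact ae_of_all _ fun δ ↦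
        (measurePreserving_add_right μ (s δ)).quasiMeasurePreserving.ae_eq hfg
    · exact (hf.comp_measurable hadd).measurableSet_eq_fun (hg.comp_measurable hadd)
  filter_upwards [hae] with θ hθ using integral_congr_ae hθ

def gainEigenvalue (m : ℤ) : ℂ := 1 / (1 - 4 * (m : ℂ) ^ 2)

lemma one_sub_four_mul_sq_ne_zero (m : ℤ) : 1 - 4 * (m : ℂ) ^ 2 ≠ 0 := by
  norm_cast
  intro h
  have : (4 : ℤ) ∣ 1 := ⟨m ^ 2, by linarith⟩
  norm_num at this

lemma gainEigenvalue_zero : gainEigenvalue 0 = 1 := by simp [gainEigenvalue]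

lemma gainEigenvalue_ne_zero (m : ℤ) : gainEigenvalue m ≠ 0 :=
  one_div_ne_zero (one_sub_four_mul_sq_ne_zero m)

lemma gainEigenvalue_eq_ofReal (m : ℤ) :
    gainEigenvalue m = ((1 - 4 * (m : ℝ) ^ 2)⁻¹ : ℝ) := by
  simp [gainEigenvalue]

lemma one_sub_four_mul_sq_neg {m : ℤ} (hm : m ≠ 0) : 1 - 4 * (m : ℝ) ^ 2 < 0 := by
  have : (1 : ℝ) ≤ |(m : ℝ)| := by exact_mod_cast Int.one_le_abs hm
  nlinarith [sq_abs (m : ℝ)]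

lemma abs_le_abs_one_sub_four_mul_sq (m : ℤ) : |(m : ℝ)| ≤ |1 - 4 * (m : ℝ) ^ 2| := by
  rcases eq_or_ne m 0 with rfl | hm
  · simp
  have : (1 : ℝ) ≤ |(m : ℝ)| := by exact_mod_cast Int.one_le_abs hm
  rw [abs_of_neg (one_sub_four_mul_sq_neg hm)]
  nlinarith [sq_abs (m : ℝ)]

lemma tendsto_gainEigenvalue_cofinite : Tendsto gainEigenvalue cofinite (𝓝 0) := by
  have hnorm : Tendsto (fun m : ℤ ↦ ‖1 - 4 * (m : ℂ) ^ 2‖) cofinite atTop := by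
    refine tendsto_atTop_mono (fun m ↦ ?_)
      (tendsto_norm_cocompact_atTop.comp Int.tendsto_coe_cofinite)
    have : 1 - 4 * (m : ℂ) ^ 2 = ((1 - 4 * (m : ℝ) ^ 2 : ℝ) : ℂ) := by push_cast; ring
    rw [Function.comp_apply, this, Complex.norm_real, Real.norm_eq_abs, Real.norm_eq_abs]
    exact abs_le_abs_one_sub_four_mul_sq m
  exact (tendsto_inv₀_cobounded.comp (tendsto_norm_atTop_iff_cobounded.mp hnorm)).congr
    fun m ↦ (one_div _).symm

lemma fourier_add_coe_two_pi (m : ℤ) (θ : S1) (s : ℝ) :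
    fourier m (θ + (s : S1)) = fourier m θ * Complex.exp (m * s * Complex.I) := by
  rw [fourier_apply, fourier_apply, zsmul_add, AddCircle.toCircle_add, Circle.coe_mul,
    fourier_coe_apply']
  congr 2
  field_simp
  push_cast
  ring

lemma Kop_fourier (m : ℤ) : Kop (fourier m) = fun θ ↦ gainEigenvalue m * fourier m θ := by
  funext θ
  have hshift : ∀ δ : ℝ, fourier m (θ + ((π - 2 * arcsin δ : ℝ) : S1)) =
      fourier m θ * Complex.exp (m * π * Complex.I) *
        Complex.exp (-2 * Complex.I * m * arcsin δ) := fun δ ↦ by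
    rw [fourier_add_coe_two_pi, mul_assoc (fourier m θ), ← Complex.exp_add]
    push_cast
    ring_nf
  have hden : 1 + (-2 * Complex.I * m) ^ 2 = 1 - 4 * (m : ℂ) ^ 2 := by
    ring_nf
    rw [Complex.I_sq]
    ring
  have hparity : Complex.exp (m * π * Complex.I) * (2 * Complex.cosh (-2 * Complex.I * m * π / 2))
      = 2 := by
    rw [Complex.two_cosh, mul_add, ← Complex.exp_add, ← Complex.exp_add,
      show (m * π * Complex.I + -2 * Complex.I * m * π / 2 : ℂ) = 0 by ring,
      show (m * π * Complex.I + -(-2 * Complex.I * m * π / 2) : ℂ) = m * (2 * π * Complex.I) by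
        ring, Complex.exp_zero, Complex.exp_int_mul_two_pi_mul_I]
    norm_num
  simp only [Kop, hshift, intervalIntegral.integral_const_mul]
  rw [integral_cexp_mul_arcsin _ (hden ▸ one_sub_four_mul_sq_ne_zero m), hden,
    mul_assoc (fourier m θ), ← mul_div_assoc, hparity, gainEigenvalue]
  ring

lemma Kop_congr_ae {f g : S1 → ℂ} (hf : StronglyMeasurable f) (hg : StronglyMeasurable g)
    (hfg : f =ᵐ[volume] g) : Kop f =ᵐ[volume] Kop g := by
  filter_upwards [ae_eq_integral_comp_add (ν := volume.restrict (Ioc (-1) 1))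
    (by fun_prop : Measurable fun δ : ℝ ↦ ((π - 2 * arcsin δ : ℝ) : S1)) hf hg hfg] with θ hθ
  simp only [Kop, intervalIntegral.integral_of_le (by norm_num : (-1 : ℝ) ≤ 1), hθ]

lemma Kop_const_mul (c : ℂ) (f : S1 → ℂ) : Kop (fun x ↦ c * f x) = fun θ ↦ c * Kop f θ := by
  funext θ
  simp only [Kop, intervalIntegral.integral_const_mul]
  ring

lemma apply_volumeFourierBasis_of_ae_eq_Kop
    (T : Lp ℂ 2 (volume : Measure S1) →L[ℂ] Lp ℂ 2 (volume : Measure S1))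
    (hT : ∀ f : Lp ℂ 2 (volume : Measure S1), (T f : S1 → ℂ) =ᵐ[volume] Kop f) (m : ℤ) :
    T (AddCircle.volumeFourierBasis m) =
      gainEigenvalue m • AddCircle.volumeFourierBasis m := by
  set e := AddCircle.volumeFourierBasis (T := 2 * π) m
  set c : ℂ := ((√(2 * π) : ℝ) : ℂ)⁻¹
  have he : e =ᵐ[volume] fun x ↦ c * fourier m x := by
    rw [show e = AddCircle.volumeFourierLp m from congr_fun AddCircle.coe_volumeFourierBasis m]
    exact AddCircle.coeFn_volumeFourierLp m
  apply Lp.ext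
  calc T e =ᵐ[volume] Kop e := hT e
    _ =ᵐ[volume] Kop fun x ↦ c * fourier m x :=
      Kop_congr_ae (Lp.stronglyMeasurable e) (by fun_prop) he
    _ = fun θ ↦ gainEigenvalue m * (c * fourier m θ) := by
      rw [Kop_const_mul, Kop_fourier]
      ext θ
      ring
    _ =ᵐ[volume] ⇑(gainEigenvalue m • e) := by
      filter_upwards [Lp.coeFn_smul (gainEigenvalue m) e, he] with x hx hex
      rw [hx, Pi.smul_apply, hex, smul_eq_mul]

/-- the spectrum of `K`, viewed as a bounded linear operator on the
complex Hilbert space `L²(S¹)`, equals `{0} ∪ {1/(1 − 4m²) : m ∈ ℤ}`.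
In particular `1` belongs to the spectrum, all other nonzero spectral values are
(real and) negative, and `0` is the only accumulation point of the spectrum. -/
theorem K_spectrum
    (T : Lp ℂ 2 (volume : Measure S1) →L[ℂ] Lp ℂ 2 (volume : Measure S1))
    (hT : ∀ f : Lp ℂ 2 (volume : Measure S1), (T f : S1 → ℂ) =ᵐ[volume] Kop f) :
    spectrum ℂ T = {0} ∪ {z : ℂ | ∃ m : ℤ, z = 1 / (1 - 4 * (m : ℂ) ^ 2)} ∧
    (1 : ℂ) ∈ spectrum ℂ T ∧
    (∀ z ∈ spectrum ℂ T, z ≠ 0 → z ≠ 1 → ∃ r : ℝ, r < 0 ∧ z = (r : ℂ)) ∧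
    (∀ z : ℂ, AccPt z (Filter.principal (spectrum ℂ T)) ↔ z = 0) := by
  have hspec : spectrum ℂ T = insert 0 (range gainEigenvalue) := by
    rw [HilbertBasis.spectrum_eq_closure_range (apply_volumeFourierBasis_of_ae_eq_Kop T hT),
      tendsto_gainEigenvalue_cofinite.closure_range_eq_insert]
  rw [hspec]
  refine ⟨?_, mem_insert_of_mem _ ⟨0, gainEigenvalue_zero⟩, ?_, fun z ↦
    tendsto_gainEigenvalue_cofinite.accPt_insert_range_iff gainEigenvalue_ne_zero⟩
  · ext z
    simp [gainEigenvalue, eq_comm]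
  · rintro z (rfl | ⟨m, rfl⟩) hz0 hz1
    · exact absurd rfl hz0
    · have hm : m ≠ 0 := by
        rintro rfl
        exact hz1 gainEigenvalue_zero
      exact ⟨_, inv_lt_zero.mpr (one_sub_four_mul_sq_neg hm), gainEigenvalue_eq_ofReal m⟩
end
end

section
/- The operator K is smoothing from L² to L^∞: for every f ∈ L²(S¹), the function K f is (essentially) bounded and ‖K f‖_{L^∞(S¹)} ≤ (√π/4) ‖f‖_{L²(S¹)}. -/
open MeasureTheory Real

noncomputable section

/-!
Substituting `δ = cos (w / 2)` turns `K f (θ)` into `(1/4) ∫₀^{2π} sin (w/2) f (θ + w) dw`.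
By Cauchy–Schwarz this is at most `(1/4) ‖sin (·/2)‖_{L²(0,2π)} ‖f (θ + ·)‖_{L²(0,2π)}`;
the first factor is `√π` and, by translation invariance of arclength, the second is `‖f‖_{L²}`.
-/

open Set

theorem enorm_integral_smul_le_eLpNorm_mul_eLpNorm {α E : Type*} [MeasurableSpace α] {μ : Measure α}
    [NormedAddCommGroup E] [NormedSpace ℝ E] {g : α → ℝ} {h : α → E}
    (hg : AEStronglyMeasurable g μ) (hh : AEStronglyMeasurable h μ) :
    ‖∫ a, g a • h a ∂μ‖ₑ ≤ eLpNorm g 2 μ * eLpNorm h 2 μ :=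
  calc ‖∫ a, g a • h a ∂μ‖ₑ ≤ eLpNorm (g • h) 1 μ := by
        rw [eLpNorm_one_eq_lintegral_enorm]; exact enorm_integral_le_lintegral_enorm _
    _ ≤ eLpNorm g 2 μ * eLpNorm h 2 μ := eLpNorm_smul_le_mul_eLpNorm hh hg

theorem eLpNorm_comp_add_coe_Ioc {T : ℝ} [Fact (0 < T)] {E : Type*} [NormedAddCommGroup E]
    {F : AddCircle T → E} (hF : AEStronglyMeasurable F volume) (θ : AddCircle T) (p : ENNReal) :
    eLpNorm (fun w : ℝ => F (θ + w)) p (volume.restrict (Ioc 0 T)) = eLpNorm F p volume := by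
  have hadd := measurePreserving_add_left (volume : Measure (AddCircle T)) θ
  have hmk := AddCircle.measurePreserving_mk T 0
  rw [zero_add] at hmk
  rw [← eLpNorm_comp_measurePreserving hF hadd]
  exact eLpNorm_comp_measurePreserving (hF.comp_measurePreserving hadd) hmk

theorem image_cos_half_Icc : (fun w => cos (w / 2)) '' Icc 0 (2 * π) = Icc (-1) 1 := by
  ext y
  constructor
  · rintro ⟨w, -, rfl⟩
    exact ⟨neg_one_le_cos _, cos_le_one _⟩
  · rintro ⟨h₁, h₂⟩
    refine ⟨2 * arccos y,
      ⟨mul_nonneg zero_le_two (arccos_nonneg y), by linarith [arccos_le_pi y]⟩, ?_⟩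
    simp [cos_arccos h₁ h₂]

theorem injOn_cos_half : InjOn (fun w => cos (w / 2)) (Icc 0 (2 * π)) := by
  intro a ha b hb hab
  have := injOn_cos ⟨by linarith [ha.1], by linarith [ha.2]⟩
    ⟨by linarith [hb.1], by linarith [hb.2]⟩ hab
  linarith

theorem pi_sub_two_mul_arcsin_cos_half {w : ℝ} (hw : w ∈ Icc 0 (2 * π)) :
    π - 2 * arcsin (cos (w / 2)) = w := by
  rw [arcsin_eq_pi_div_two_sub_arccos, arccos_cos (by linarith [hw.1]) (by linarith [hw.2])]
  ring

/-- The substitution `δ = cos (w / 2)`, i.e. `w = π - 2 arcsin δ`, sweeps the outgoing angle once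
around the circle, with Jacobian `sin (w / 2) / 2`. -/
theorem Kop_eq_intervalIntegral_sin_half_smul (F : S1 → ℂ) (θ : S1) :
    Kop F θ = (1 / 4 : ℂ) * ∫ w in 0..2 * π, sin (w / 2) • F (θ + w) := by
  have hderiv : ∀ w ∈ Icc 0 (2 * π),
      HasDerivWithinAt (fun w => cos (w / 2)) (-sin (w / 2) * (1 / 2)) (Icc 0 (2 * π)) w :=
    fun w _ => (((hasDerivAt_id w).div_const 2).cos.congr_deriv (by simp)).hasDerivWithinAt
  rw [Kop, intervalIntegral.integral_of_le (by norm_num), ← integral_Icc_eq_integral_Ioc,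
    ← image_cos_half_Icc, integral_image_eq_integral_abs_deriv_smul measurableSet_Icc hderiv
      injOn_cos_half, intervalIntegral.integral_of_le (by positivity),
    ← integral_Icc_eq_integral_Ioc]
  have hcongr : EqOn (fun w => |-sin (w / 2) * (1 / 2)| • F (θ + ↑(π - 2 * arcsin (cos (w / 2)))))
      (fun w => (1 / 2 : ℝ) • sin (w / 2) • F (θ + w)) (Icc 0 (2 * π)) := by
    intro w hw
    have hsin : 0 ≤ sin (w / 2) :=
      sin_nonneg_of_nonneg_of_le_pi (by linarith [hw.1]) (by linarith [hw.2])
    simp only [pi_sub_two_mul_arcsin_cos_half hw, smul_smul, neg_mul, abs_neg,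
      abs_of_nonneg (mul_nonneg hsin (by norm_num : (0:ℝ) ≤ 1 / 2))]
    rw [mul_comm]
  rw [setIntegral_congr_fun measurableSet_Icc hcongr, integral_smul, Complex.real_smul]
  push_cast
  ring

theorem integral_sin_half_sq : ∫ w in 0..2 * π, sin (w / 2) ^ 2 = π := by
  rw [intervalIntegral.integral_comp_div (fun x => sin x ^ 2) two_ne_zero, integral_sin_sq,
    mul_div_cancel_left₀ π two_ne_zero]
  simp only [sin_zero, sin_pi, zero_mul, sub_zero, zero_div, smul_eq_mul]
  ring

theorem eLpNorm_sin_half_Ioc :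
    eLpNorm (fun w => sin (w / 2)) 2 (volume.restrict (Ioc 0 (2 * π))) = ENNReal.ofReal √π := by
  have hmem : MemLp (fun w => sin (w / 2)) 2 (volume.restrict (Ioc 0 (2 * π))) :=
    MemLp.of_bound (by fun_prop) 1 (.of_forall fun w => by simpa using abs_sin_le_one (w / 2))
  rw [hmem.eLpNorm_eq_integral_rpow_norm two_ne_zero ENNReal.ofNat_ne_top, sqrt_eq_rpow]
  norm_num [← intervalIntegral.integral_of_le (by positivity : 0 ≤ 2 * π), integral_sin_half_sq]

theorem stronglyMeasurable_Kop {F : S1 → ℂ} (hF : StronglyMeasurable F) :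
    StronglyMeasurable (Kop F) := by
  have hmeas : Measurable fun p : S1 × ℝ => p.1 + ((π - 2 * arcsin p.2 : ℝ) : S1) :=
    (continuous_fst.add ((AddCircle.continuous_mk' _).comp (continuous_const.sub
      (continuous_const.mul (continuous_arcsin.comp continuous_snd))))).measurable
  have hKop : Kop F = fun θ => (1 / 2 : ℂ) *
      ∫ δ in Ioc (-1 : ℝ) 1, F (θ + ((π - 2 * arcsin δ : ℝ) : S1)) := by
    ext θ
    rw [Kop, intervalIntegral.integral_of_le (by norm_num)]
  rw [hKop]
  exact ((hF.comp_measurable hmeas).integral_prod_right').const_mul _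

theorem enorm_Kop_le (f : Lp ℂ 2 (volume : Measure S1)) (θ : S1) :
    ‖Kop f θ‖ₑ ≤ ENNReal.ofReal (√π / 4 * ‖f‖) := by
  have hshift : AEStronglyMeasurable (fun w : ℝ => f (θ + w)) (volume.restrict (Ioc 0 (2 * π))) :=
    ((Lp.stronglyMeasurable f).comp_measurable
      (continuous_const.add (AddCircle.continuous_mk' _)).measurable).aestronglyMeasurable
  rw [Kop_eq_intervalIntegral_sin_half_smul, intervalIntegral.integral_of_le (by positivity),
    enorm_mul]
  calc ‖(1 / 4 : ℂ)‖ₑ * ‖∫ w in Ioc 0 (2 * π), sin (w / 2) • f (θ + w)‖ₑ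
      ≤ ‖(1 / 4 : ℂ)‖ₑ * (eLpNorm (fun w => sin (w / 2)) 2 (volume.restrict (Ioc 0 (2 * π))) *
          eLpNorm (fun w : ℝ => f (θ + w)) 2 (volume.restrict (Ioc 0 (2 * π)))) := by
        gcongr
        exact enorm_integral_smul_le_eLpNorm_mul_eLpNorm (by fun_prop) hshift
    _ = ENNReal.ofReal (√π / 4 * ‖f‖) := by
        rw [eLpNorm_sin_half_Ioc, eLpNorm_comp_add_coe_Ioc (Lp.aestronglyMeasurable f),
          ← Lp.enorm_def, ← ofReal_norm f, ← ofReal_norm,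
          ← ENNReal.ofReal_mul (sqrt_nonneg π), ← ENNReal.ofReal_mul (norm_nonneg _),
          norm_div, norm_one, Complex.norm_ofNat]
        congr 1
        ring

/-- `K` is smoothing from `L²` to `L^∞`: for every `f ∈ L²(S¹)`,
`K f` is essentially bounded and `‖K f‖_{L^∞} ≤ (√π/4) ‖f‖_{L²}`. -/
theorem K_smoothing_L2_to_Linfty (f : Lp ℂ 2 (volume : Measure S1)) :
    MemLp (Kop f) ⊤ (volume : Measure S1) ∧
    eLpNorm (Kop f) ⊤ (volume : Measure S1)
      ≤ ENNReal.ofReal (Real.sqrt π / 4 * ‖f‖) := by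
  have hbound : eLpNorm (Kop f) ⊤ volume ≤ ENNReal.ofReal (√π / 4 * ‖f‖) := by
    rw [eLpNorm_exponent_top]
    exact eLpNormEssSup_le_of_ae_enorm_bound (.of_forall (enorm_Kop_le f))
  exact ⟨⟨(stronglyMeasurable_Kop (Lp.stronglyMeasurable f)).aestronglyMeasurable,
    hbound.trans_lt ENNReal.ofReal_lt_top⟩, hbound⟩
end
end
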